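/- Given a negative definite function r² on a set P (i.e., ∑_{n,m} c_n c_m r²(p_n, p_m) ≤ 0 whenever ∑ c_n = 0) with r² ≥ 0 and r²(p,p) = 0, the function r (its nonnegative square root) is also negative definite. -/

import Mathlib

/-- A symmetric function `d : P × P → ℝ` is negative definite if for all finite families
and coefficients summing to zero the quadratic form is nonpositive. -/
def IsNegDef {P : Type*} (d : P → P → ℝ) : Prop :=
  ∀ (N : ℕ) (p : Fin N → P) (c : Fin N → ℝ), ∑ n, c n = 0 →
    ∑ n, ∑ m, c n * c m * d (p n) (p m) ≤ 0

/-!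
Schoenberg: if `d` is negative definite with zero diagonal, then `exp (-t d)` is positive
semidefinite for `t ≥ 0`. Centring at a point `p₀` turns `d` into the positive semidefinite kernel
`b p q = d p p₀ + d q p₀ - d p q`, and `exp (-t d p q) = u p * u q * exp (t b p q)`, where entrywise
exponentials of positive semidefinite matrices stay positive semidefinite by the Schur product
theorem. Hence every `1 - exp (-t d)` is negative definite, and so is any positive mixture of them.
For `0 < α < 1` the substitution `t ↦ t / x` gives
`x ^ α = C⁻¹ ∫₀^∞ (1 - exp (-t x)) t ^ (-1 - α) dt` with `0 < C < ∞`, which exhibits `d ^ α`,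
in particular `√d`, as such a mixture.
-/

open MeasureTheory Set Real

namespace Matrix

variable {ι : Type*} [Fintype ι]

lemma sum_sum_mul_eq_dotProduct_mulVec {R : Type*} [CommSemiring R] (K : Matrix ι ι R)
    (c : ι → R) : ∑ i, ∑ j, c i * c j * K i j = c ⬝ᵥ K *ᵥ c := by
  simp only [dotProduct, mulVec, Finset.mul_sum]
  exact Finset.sum_congr rfl fun i _ => Finset.sum_congr rfl fun j _ => by ring

open scoped ComplexOrder in
theorem PosSemidef.map_pow {𝕜 : Type*} [RCLike 𝕜] {A : Matrix ι ι 𝕜} (hA : A.PosSemidef)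
    (k : ℕ) : (A.map (· ^ k)).PosSemidef := by
  induction k with
  | zero => convert posSemidef_vecMulVec_self_star (1 : ι → 𝕜) using 1; ext; simp [vecMulVec]
  | succ k ih =>
    have hsucc : A.map (· ^ (k + 1)) = A.map (· ^ k) ⊙ A := by ext; simp [pow_succ]
    exact hsucc ▸ ih.hadamard hA

theorem PosSemidef.map_exp {A : Matrix ι ι ℝ} (hA : A.PosSemidef) :
    (A.map Real.exp).PosSemidef := by
  refine .of_dotProduct_mulVec_nonneg (hA.isHermitian.map _ fun _ => rfl) fun c => ?_
  have hsum : HasSum (fun k : ℕ => (c ⬝ᵥ A.map (· ^ k) *ᵥ c) / k.factorial)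
      (c ⬝ᵥ A.map Real.exp *ᵥ c) := by
    simp only [← sum_sum_mul_eq_dotProduct_mulVec, Finset.sum_div, map_apply]
    refine hasSum_sum fun i _ => hasSum_sum fun j _ => ?_
    simpa [Real.exp_eq_exp_ℝ, mul_div_assoc] using
      (NormedSpace.expSeries_div_hasSum_exp (A i j)).mul_left (c i * c j)
  simpa using hsum.nonneg fun k => div_nonneg ((hA.map_pow k).dotProduct_mulVec_nonneg c)
    (Nat.cast_nonneg _)

theorem posSemidef_centered {D : Matrix ι ι ℝ} (hD : D.IsSymm) (hdiag : ∀ i, D i i = 0)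
    (hneg : ∀ c : ι → ℝ, ∑ i, c i = 0 → c ⬝ᵥ D *ᵥ c ≤ 0) (i₀ : ι) :
    (of fun i j => D i i₀ + D j i₀ - D i j).PosSemidef := by
  classical
  refine .of_dotProduct_mulVec_nonneg ?_ fun c => ?_
  · ext i j
    simp [hD.apply i j, add_comm]
  -- The form at `c` is minus the form of `D` at `c - (∑ c) • e i₀`, whose coefficients sum to 0.
  set s := ∑ i, c i
  set a : ι → ℝ := fun i => D i i₀
  set γ := c - s • Pi.single i₀ 1
  have hγ : ∑ i, γ i = 0 := by simp [γ, s, Pi.single_apply]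
  have hcol : D *ᵥ Pi.single i₀ 1 = a := by
    ext i; simp [a, mulVec, dotProduct, Pi.single_apply]
  have hrow : Pi.single i₀ 1 ⬝ᵥ D *ᵥ c = c ⬝ᵥ a := by
    rw [dotProduct_mulVec, ← mulVec_transpose, hD.eq, hcol, dotProduct_comm]
  have hγγ : γ ⬝ᵥ D *ᵥ γ = c ⬝ᵥ D *ᵥ c - 2 * s * (c ⬝ᵥ a) := by
    simp only [γ, mulVec_sub, mulVec_smul, dotProduct_sub, sub_dotProduct, dotProduct_smul,
      smul_dotProduct, hcol, hrow, single_one_dotProduct, hdiag, a, smul_eq_mul]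
    ring
  have hcc : star c ⬝ᵥ (of fun i j => D i i₀ + D j i₀ - D i j) *ᵥ c
      = 2 * s * (c ⬝ᵥ a) - c ⬝ᵥ D *ᵥ c := by
    have hB : (of fun i j => D i i₀ + D j i₀ - D i j) = vecMulVec a 1 + vecMulVec 1 a - D := by
      ext i j; simp [vecMulVec, a]
    simp only [hB, star_trivial, sub_mulVec, add_mulVec, vecMulVec_mulVec, dotProduct_add,
      dotProduct_sub, op_smul_eq_smul, dotProduct_smul, dotProduct_one, one_dotProduct, smul_eq_mul]
    rw [dotProduct_comm c a]
    ring
  linarith [hneg γ hγ]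

theorem posSemidef_map_exp_neg_mul {D : Matrix ι ι ℝ} (hD : D.IsSymm) (hdiag : ∀ i, D i i = 0)
    (hneg : ∀ c : ι → ℝ, ∑ i, c i = 0 → c ⬝ᵥ D *ᵥ c ≤ 0) {t : ℝ} (ht : 0 ≤ t) :
    (D.map fun x => Real.exp (-(t * x))).PosSemidef := by
  rcases isEmpty_or_nonempty ι with hι | ⟨⟨i₀⟩⟩
  · rw [Subsingleton.elim (D.map _) 0]; exact .zero
  set u : ι → ℝ := fun i => Real.exp (-(t * D i i₀))
  have h : D.map (fun x => Real.exp (-(t * x)))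
      = vecMulVec u (star u) ⊙ (t • of fun i j => D i i₀ + D j i₀ - D i j).map Real.exp := by
    ext i j
    simp only [map_apply, hadamard_apply, vecMulVec_apply, star_trivial, smul_apply, of_apply,
      smul_eq_mul, u, ← Real.exp_add]
    ring_nf
  rw [h]
  exact (posSemidef_vecMulVec_self_star u).hadamard
    (((posSemidef_centered hD hdiag hneg i₀).smul ht).map_exp)

end Matrix

section

variable {α : ℝ}

lemma integrableOn_one_sub_exp_neg_mul_rpow (hα0 : 0 < α) (hα1 : α < 1) :
    IntegrableOn (fun t : ℝ => (1 - exp (-t)) * t ^ (-1 - α)) (Ioi 0) := by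
  have hcont : ContinuousOn (fun t : ℝ => (1 - exp (-t)) * t ^ (-1 - α)) (Ioi 0) :=
    (by fun_prop : Continuous fun t : ℝ => 1 - exp (-t)).continuousOn.mul
      fun t ht => (continuousAt_rpow_const _ _ (Or.inl (ne_of_gt ht))).continuousWithinAt
  have hmeas (s : Set ℝ) (hs : MeasurableSet s) (hs0 : s ⊆ Ioi 0) :
      AEStronglyMeasurable (fun t : ℝ => (1 - exp (-t)) * t ^ (-1 - α)) (volume.restrict s) :=
    (hcont.mono hs0).aestronglyMeasurable hs
  rw [← Ioc_union_Ioi_eq_Ioi zero_le_one]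
  refine IntegrableOn.union ?_ ?_
  · have hg : IntegrableOn (fun t : ℝ => t ^ (-α)) (Ioc 0 1) := by
      rw [← intervalIntegrable_iff_integrableOn_Ioc_of_le zero_le_one]
      exact intervalIntegral.intervalIntegrable_rpow' (r := -α) (by linarith)
    refine hg.mono' (hmeas _ measurableSet_Ioc fun t ht => ht.1) ?_
    refine (ae_restrict_iff' measurableSet_Ioc).2 (.of_forall fun t ⟨ht0, _⟩ => ?_)
    have h1 : 0 ≤ 1 - exp (-t) := by simp [exp_le_one_iff, ht0.le]
    have h2 : 1 - exp (-t) ≤ t := by linarith [add_one_le_exp (-t)]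
    calc ‖(1 - exp (-t)) * t ^ (-1 - α)‖ = (1 - exp (-t)) * t ^ (-1 - α) := by
          rw [Real.norm_of_nonneg (mul_nonneg h1 (rpow_nonneg ht0.le _))]
      _ ≤ t * t ^ (-1 - α) := by gcongr
      _ = t ^ (-α) := by rw [show -α = 1 + (-1 - α) by ring, rpow_add ht0, rpow_one]
  · refine (integrableOn_Ioi_rpow_of_lt (a := -1 - α) (by linarith) one_pos).mono'
      (hmeas _ measurableSet_Ioi (Ioi_subset_Ioi zero_le_one)) ?_
    refine (ae_restrict_iff' measurableSet_Ioi).2 (.of_forall fun t (ht : 1 < t) => ?_)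
    have ht0 : 0 < t := one_pos.trans ht
    have h1 : 0 ≤ 1 - exp (-t) := by simp [exp_le_one_iff, ht0.le]
    rw [Real.norm_of_nonneg (mul_nonneg h1 (rpow_nonneg ht0.le _))]
    exact mul_le_of_le_one_left (rpow_nonneg ht0.le _) (by linarith [exp_pos (-t)])

lemma integral_one_sub_exp_neg_mul_rpow_pos (hα0 : 0 < α) (hα1 : α < 1) :
    0 < ∫ t in Ioi 0, (1 - exp (-t)) * t ^ (-1 - α) := by
  have hpos : ∀ t ∈ Ioi (0 : ℝ), 0 < (1 - exp (-t)) * t ^ (-1 - α) := fun t (ht : 0 < t) =>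
    mul_pos (by simpa using ht) (rpow_pos_of_pos ht _)
  rw [setIntegral_pos_iff_support_of_nonneg_ae
    ((ae_restrict_iff' measurableSet_Ioi).2 (.of_forall fun t ht => (hpos t ht).le))
    (integrableOn_one_sub_exp_neg_mul_rpow hα0 hα1),
    inter_eq_right.2 fun t ht => Function.mem_support.2 (hpos t ht).ne', Real.volume_Ioi]
  exact ENNReal.zero_lt_top

lemma one_sub_exp_neg_mul_rpow_eq {x t : ℝ} (hx : 0 < x) (ht : 0 < t) :
    (1 - exp (-(t * x))) * t ^ (-1 - α)
      = x ^ (1 + α) * ((1 - exp (-(x * t))) * (x * t) ^ (-1 - α)) := by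
  have hxx : x ^ (1 + α) * x ^ (-1 - α) = 1 := by rw [← rpow_add hx]; norm_num
  rw [mul_rpow hx.le ht.le, mul_comm t x]
  linear_combination -((1 - exp (-(x * t))) * t ^ (-1 - α)) * hxx

lemma integrableOn_one_sub_exp_neg_mul_mul_rpow (hα0 : 0 < α) (hα1 : α < 1) {x : ℝ}
    (hx : 0 ≤ x) :
    IntegrableOn (fun t : ℝ => (1 - exp (-(t * x))) * t ^ (-1 - α)) (Ioi 0) := by
  rcases hx.eq_or_lt with rfl | hx
  · simp
  have h : IntegrableOn (fun t => (1 - exp (-(x * t))) * (x * t) ^ (-1 - α)) (Ioi 0) :=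
    (integrableOn_Ioi_comp_mul_left_iff (fun t => (1 - exp (-t)) * t ^ (-1 - α)) 0 hx).2
      (by simpa using integrableOn_one_sub_exp_neg_mul_rpow hα0 hα1)
  exact IntegrableOn.congr_fun (h.const_mul (x ^ (1 + α)))
    (fun t ht => (one_sub_exp_neg_mul_rpow_eq hx ht).symm) measurableSet_Ioi

lemma rpow_mul_integral_eq (hα0 : 0 < α) {x : ℝ} (hx : 0 ≤ x) :
    x ^ α * ∫ t in Ioi 0, (1 - exp (-t)) * t ^ (-1 - α)
      = ∫ t in Ioi 0, (1 - exp (-(t * x))) * t ^ (-1 - α) := by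
  rcases hx.eq_or_lt with rfl | hx
  · simp [zero_rpow hα0.ne']
  rw [setIntegral_congr_fun measurableSet_Ioi fun t ht => one_sub_exp_neg_mul_rpow_eq hx ht,
    integral_const_mul, integral_comp_mul_left_Ioi (fun t => (1 - exp (-t)) * t ^ (-1 - α)) 0 hx,
    mul_zero, smul_eq_mul, ← mul_assoc, ← rpow_neg_one, ← rpow_add hx]
  ring_nf

end

namespace IsNegDef

variable {P : Type*} {d : P → P → ℝ}

lemma nonneg (hsymm : ∀ p q, d p q = d q p) (hdiag : ∀ p, d p p = 0) (hnd : IsNegDef d)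
    (p q : P) : 0 ≤ d p q := by
  have h := hnd 2 ![p, q] ![1, -1] (by simp)
  simp only [Fin.sum_univ_two, Matrix.cons_val_zero, Matrix.cons_val_one, hdiag, hsymm q p] at h
  linarith

lemma mul_const (hnd : IsNegDef d) {a : ℝ} (ha : 0 ≤ a) : IsNegDef fun p q => d p q * a := by
  intro N p c hc
  have h : ∑ n, ∑ m, c n * c m * (d (p n) (p m) * a)
      = (∑ n, ∑ m, c n * c m * d (p n) (p m)) * a := by
    simp only [Finset.sum_mul]
    exact Finset.sum_congr rfl fun n _ => Finset.sum_congr rfl fun m _ => by ring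
  rw [h]
  exact mul_nonpos_of_nonpos_of_nonneg (hnd N p c hc) ha

lemma integral {T : Type*} [MeasurableSpace T] {μ : Measure T} {k : T → P → P → ℝ}
    (hk : ∀ᵐ t ∂μ, IsNegDef (k t)) (hint : ∀ p q, Integrable (fun t => k t p q) μ) :
    IsNegDef fun p q => ∫ t, k t p q ∂μ := by
  intro N p c hc
  have h : ∑ n, ∑ m, c n * c m * ∫ t, k t (p n) (p m) ∂μ
      = ∫ t, ∑ n, ∑ m, c n * c m * k t (p n) (p m) ∂μ := by
    rw [integral_finsetSum _ fun n _ => integrable_finsetSum _ fun m _ => (hint _ _).const_mul _]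
    refine Finset.sum_congr rfl fun n _ => ?_
    rw [integral_finsetSum _ fun m _ => (hint _ _).const_mul _]
    simp only [integral_const_mul]
  rw [h]
  exact integral_nonpos_of_ae (hk.mono fun t ht => ht N p c hc)

lemma one_sub_exp_neg_mul (hsymm : ∀ p q, d p q = d q p) (hdiag : ∀ p, d p p = 0)
    (hnd : IsNegDef d) {t : ℝ} (ht : 0 ≤ t) :
    IsNegDef fun p q => 1 - exp (-(t * d p q)) := by
  intro N p c hc
  set D : Matrix (Fin N) (Fin N) ℝ := Matrix.of fun n m => d (p n) (p m)
  have hD : (D.map fun x => exp (-(t * x))).PosSemidef :=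
    Matrix.posSemidef_map_exp_neg_mul (Matrix.IsSymm.ext fun n m => hsymm _ _)
      (fun n => hdiag _) (fun c hc => Matrix.sum_sum_mul_eq_dotProduct_mulVec D c ▸ hnd N p c hc) ht
  have h := hD.dotProduct_mulVec_nonneg c
  rw [star_trivial, ← Matrix.sum_sum_mul_eq_dotProduct_mulVec] at h
  simp only [mul_sub, mul_one, Finset.sum_sub_distrib, ← Finset.sum_mul, ← Finset.mul_sum, hc]
  simpa [D] using h

theorem rpow (hsymm : ∀ p q, d p q = d q p) (hdiag : ∀ p, d p p = 0) (hnd : IsNegDef d)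
    {α : ℝ} (hα0 : 0 < α) (hα1 : α < 1) : IsNegDef fun p q => d p q ^ α := by
  set C := ∫ t in Ioi 0, (1 - exp (-t)) * t ^ (-1 - α)
  have hC : 0 < C := integral_one_sub_exp_neg_mul_rpow_pos hα0 hα1
  have hrepr : (fun p q => d p q ^ α)
      = fun p q => (∫ t in Ioi 0, (1 - exp (-(t * d p q))) * t ^ (-1 - α)) * C⁻¹ := by
    ext p q
    rw [eq_mul_inv_iff_mul_eq₀ hC.ne', rpow_mul_integral_eq hα0 (hnd.nonneg hsymm hdiag p q)]
  rw [hrepr]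
  refine .mul_const (.integral ?_ fun p q => ?_) (inv_nonneg.2 hC.le)
  · refine (ae_restrict_iff' measurableSet_Ioi).2 (.of_forall fun t (ht : 0 < t) => ?_)
    exact (one_sub_exp_neg_mul hsymm hdiag hnd ht.le).mul_const (rpow_nonneg ht.le _)
  · exact integrableOn_one_sub_exp_neg_mul_mul_rpow hα0 hα1 (hnd.nonneg hsymm hdiag p q)

end IsNegDef

theorem sqrt_negDef_of_negDef_general {P : Type*} (d : P → P → ℝ)
    (hsymm : ∀ p q, d p q = d q p)
    (hdiag : ∀ p, d p p = 0)
    (hnd : IsNegDef d) :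
    IsNegDef (fun p q => Real.sqrt (d p q)) := by
  simpa only [Real.sqrt_eq_rpow] using
    hnd.rpow hsymm hdiag (by norm_num) (by norm_num : (1 / 2 : ℝ) < 1)

/-- if `d = r²` is negative definite, nonnegative, symmetric and vanishes on
the diagonal, then `r = √d` is also negative definite. -/
theorem sqrt_negDef_of_negDef {P : Type*} (d : P → P → ℝ)
    (hsymm : ∀ p q, d p q = d q p)
    (hnn : ∀ p q, 0 ≤ d p q) (hdiag : ∀ p, d p p = 0)
    (hnd : IsNegDef d) :
    IsNegDef (fun p q => Real.sqrt (d p q)) :=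
  sqrt_negDef_of_negDef_general d hsymm hdiag hnd
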